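/- Let C : ℝ → ℝ be nonnegative, even, integrable with support in [-δ, δ], β = ∫_{-δ}^{δ} C(y) dy, and γ_h = ∫_{-δ}^{δ} C(y) cos(hy) dy. In the Fourier trigonometric Galerkin discretization of the peridynamic eigenvalue problem on [0, 2π] with basis ψ_k(x) = e^{ikx}, the stiffness entries are a_{hk} = 2π δ_{h,-k}(β - γ_h) and the mass entries are m_{hk} = 2π δ_{h,-k}; consequently M^{-1}A is diagonal with entries λ_h = β - γ_h ≥ 0. -/

import Mathlib

/-!
The exponentials `e^{ihx}` diagonalize the peridynamic operator because it is a convolution: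
the inner integral equals `e^{ihx} (γ_h - β)`, the sine part of `∫ C(y) e^{ihy}` vanishing since
`C` is even. The outer integral is then a multiple of `∫_0^{2π} e^{i(h+k)x}`, which is `2π` when
`h = -k` and `0` otherwise. Finally `γ_h ≤ β` because `C ≥ 0` and `cos ≤ 1`.
-/

open MeasureTheory Set Real Complex

theorem setIntegral_eq_zero_of_odd {G E : Type*} [MeasurableSpace G] [AddGroup G] [MeasurableNeg G]
    [NormedAddCommGroup E] [NormedSpace ℝ E] {μ : Measure G} [μ.IsNegInvariant]
    {s : Set G} (hs : MeasurableSet s) (hsymm : -s = s) {f : G → E} (hf : ∀ x, f (-x) = -f x) :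
    ∫ x in s, f x ∂μ = 0 := by
  have hodd : ∀ x, s.indicator f (-x) = -s.indicator f x := by
    intro x
    have hmem : -x ∈ s ↔ x ∈ s := by rw [← Set.mem_neg, hsymm]
    by_cases hx : x ∈ s <;> simp [hx, hmem, hf]
  have h := integral_neg_eq_self (s.indicator f) μ
  simp only [hodd, integral_neg] at h
  rw [neg_eq_iff_add_eq_zero, ← two_smul ℝ, smul_eq_zero] at h
  rw [← integral_indicator hs]
  exact h.resolve_left two_ne_zero

theorem integral_exp_int_mul_I (n : ℤ) :
    ∫ x in Icc 0 (2 * π), Complex.exp (n * x * I) = if n = 0 then (2 * π : ℂ) else 0 := by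
  rw [integral_Icc_eq_integral_Ioc, ← intervalIntegral.integral_of_le two_pi_pos.le]
  split_ifs with hn
  · simp [hn]
  · have hnI : (n : ℂ) * I ≠ 0 := by simp [hn]
    simp_rw [mul_right_comm _ _ I]
    have hperiod : (n : ℂ) * I * (2 * π : ℝ) = n * (2 * π * I) := by push_cast; ring
    rw [integral_exp_mul_complex hnI, hperiod, Complex.exp_int_mul_two_pi_mul_I]
    simp

theorem integral_exp_mul_exp_int (h k : ℤ) :
    ∫ x in Icc 0 (2 * π), Complex.exp (h * x * I) * Complex.exp (k * x * I)
      = if h = -k then (2 * π : ℂ) else 0 := by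
  have hsum : ∀ x : ℝ, Complex.exp (h * x * I) * Complex.exp (k * x * I)
      = Complex.exp ((h + k : ℤ) * x * I) := fun x ↦ by
    push_cast; rw [← Complex.exp_add]; ring_nf
  simp_rw [hsum, integral_exp_int_mul_I, add_eq_zero_iff_eq_neg]

section

variable {C : ℝ → ℝ} {s : Set ℝ} {μ : Measure ℝ}

theorem MeasureTheory.IntegrableOn.mul_cos (hC : IntegrableOn C s μ) (ξ : ℝ) :
    IntegrableOn (fun y ↦ C y * Real.cos (ξ * y)) s μ :=
  Integrable.mul_bdd hC (by fun_prop : Continuous fun y ↦ Real.cos (ξ * y)).aestronglyMeasurable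
    (ae_of_all _ fun y ↦ by simpa using Real.abs_cos_le_one (ξ * y))

theorem setIntegral_mul_cos_le (hC : IntegrableOn C s μ) (hs : MeasurableSet s)
    (hC0 : ∀ y ∈ s, 0 ≤ C y) (ξ : ℝ) :
    ∫ y in s, C y * Real.cos (ξ * y) ∂μ ≤ ∫ y in s, C y ∂μ :=
  setIntegral_mono_on (hC.mul_cos ξ) hC hs fun y hy ↦
    mul_le_of_le_one_right (hC0 y hy) (Real.cos_le_one _)

theorem MeasureTheory.IntegrableOn.ofReal_mul_exp_mul_I (hC : IntegrableOn C s μ) (ξ : ℝ) :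
    IntegrableOn (fun y ↦ (C y : ℂ) * Complex.exp (ξ * y * I)) s μ :=
  Integrable.mul_bdd (c := 1) hC.ofReal
    (by fun_prop : Continuous fun y : ℝ ↦ Complex.exp (ξ * y * I)).aestronglyMeasurable
    (ae_of_all _ fun y ↦ by simp [← Complex.ofReal_mul, Complex.norm_exp_ofReal_mul_I])

theorem setIntegral_mul_exp_of_even (a ξ : ℝ) (hC : IntegrableOn C (Icc (-a) a))
    (hCeven : ∀ y, C (-y) = C y) :
    ∫ y in Icc (-a) a, (C y : ℂ) * Complex.exp (ξ * y * I)
      = ∫ y in Icc (-a) a, C y * Real.cos (ξ * y) := by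
  have hpart : ∀ y : ℝ, (C y : ℂ) * Complex.exp (ξ * y * I)
      = ((C y * Real.cos (ξ * y) : ℝ) : ℂ) + ((C y * Real.sin (ξ * y) : ℝ) : ℂ) * I := by
    intro y
    rw [← Complex.ofReal_mul, Complex.exp_mul_I]
    push_cast; ring
  have hsin : ∫ y in Icc (-a) a, C y * Real.sin (ξ * y) = 0 :=
    setIntegral_eq_zero_of_odd measurableSet_Icc (by simp [neg_Icc]) fun y ↦ by
      simp [hCeven, Real.sin_neg]
  apply Complex.ext
  · rw [← RCLike.re_to_complex, ← integral_re (hC.ofReal_mul_exp_mul_I ξ)]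
    simp only [hpart, RCLike.re_to_complex, add_re, ofReal_re, mul_I_re, ofReal_im, neg_zero,
      add_zero]
  · rw [← RCLike.im_to_complex, ← integral_im (hC.ofReal_mul_exp_mul_I ξ)]
    simp only [hpart, RCLike.im_to_complex, add_im, ofReal_im, mul_I_im, ofReal_re, zero_add, hsin]

theorem setIntegral_mul_exp_sub_exp_of_even (a ξ x : ℝ) (hC : IntegrableOn C (Icc (-a) a))
    (hCeven : ∀ y, C (-y) = C y) :
    ∫ y in Icc (-a) a, (C y : ℂ) *
        (Complex.exp (ξ * (x + y : ℝ) * I) - Complex.exp (ξ * x * I))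
      = Complex.exp (ξ * x * I) *
          ((∫ y in Icc (-a) a, C y * Real.cos (ξ * y)) - ∫ y in Icc (-a) a, C y : ℝ) := by
  have hshift : ∀ y : ℝ,
      (C y : ℂ) * (Complex.exp (ξ * (x + y : ℝ) * I) - Complex.exp (ξ * x * I))
      = Complex.exp (ξ * x * I) * ((C y : ℂ) * Complex.exp (ξ * y * I) - C y) := fun y ↦ by
    rw [Complex.ofReal_add, mul_add, add_mul, Complex.exp_add]; ring
  simp_rw [hshift]
  rw [integral_const_mul, integral_sub (hC.ofReal_mul_exp_mul_I ξ) (by exact hC.ofReal),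
    setIntegral_mul_exp_of_even a ξ hC hCeven, integral_complex_ofReal, Complex.ofReal_sub]

end

theorem fourier_galerkin_entries_general
    (δ : ℝ) (C : ℝ → ℝ)
    (hCnonneg : ∀ y : ℝ, 0 ≤ C y)
    (hCeven : ∀ y : ℝ, C (-y) = C y)
    (hCint : IntegrableOn C (Icc (-δ) δ))
    (h k : ℤ) :
    (-(∫ x in Icc 0 (2 * π),
        Complex.exp ((k : ℂ) * (x : ℂ) * Complex.I) *
          ∫ y in Icc (-δ) δ, (C y : ℂ) *
            (Complex.exp ((h : ℂ) * ((x : ℝ) + y : ℝ) * Complex.I)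
              - Complex.exp ((h : ℂ) * (x : ℂ) * Complex.I)))
      = (if h = -k then 1 else 0) * (2 * (π : ℂ)) *
          (((∫ y in Icc (-δ) δ, C y)
            - ∫ y in Icc (-δ) δ, C y * Real.cos ((h : ℝ) * y) : ℝ) : ℂ)) ∧
    ((∫ x in Icc 0 (2 * π),
        Complex.exp ((h : ℂ) * (x : ℂ) * Complex.I) *
          Complex.exp ((k : ℂ) * (x : ℂ) * Complex.I))
      = (if h = -k then 1 else 0) * (2 * (π : ℂ))) ∧
    (0 ≤ (∫ y in Icc (-δ) δ, C y)
          - ∫ y in Icc (-δ) δ, C y * Real.cos ((h : ℝ) * y)) := by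
  have hinner : ∀ x : ℝ, ∫ y in Icc (-δ) δ, (C y : ℂ) *
      (Complex.exp ((h : ℂ) * ((x : ℝ) + y : ℝ) * I) - Complex.exp ((h : ℂ) * x * I))
        = Complex.exp (h * x * I) * ((∫ y in Icc (-δ) δ, C y * Real.cos ((h : ℝ) * y))
            - ∫ y in Icc (-δ) δ, C y : ℝ) := fun x ↦ by
    exact_mod_cast setIntegral_mul_exp_sub_exp_of_even δ h x hCint hCeven
  refine ⟨?_, by rw [integral_exp_mul_exp_int, ite_mul, one_mul, zero_mul], ?_⟩
  · simp_rw [hinner, ← mul_assoc, mul_comm (Complex.exp (k * _ * I)), integral_mul_const,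
      integral_exp_mul_exp_int]
    split_ifs <;> push_cast <;> ring
  · exact sub_nonneg.2 (setIntegral_mul_cos_le hCint measurableSet_Icc (fun y _ ↦ hCnonneg y) h)

/-- Entries of the Fourier trigonometric Galerkin matrices for the periodic
peridynamic eigenvalue problem: `a_{hk} = 2π δ_{h,-k}(β - γ_h)`,
`m_{hk} = 2π δ_{h,-k}`, and the resulting eigenvalues `β - γ_h` are
nonnegative. -/
theorem fourier_galerkin_entries
    (δ : ℝ) (hδ0 : 0 < δ) (hδπ : δ ≤ π) (C : ℝ → ℝ)
    (hCnonneg : ∀ y : ℝ, 0 ≤ C y)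
    (hCeven : ∀ y : ℝ, C (-y) = C y)
    (hCint : IntegrableOn C (Icc (-δ) δ))
    (hCsupp : ∀ y : ℝ, y ∉ Icc (-δ) δ → C y = 0)
    (h k : ℤ) :
    (-(∫ x in Icc 0 (2 * π),
        Complex.exp ((k : ℂ) * (x : ℂ) * Complex.I) *
          ∫ y in Icc (-δ) δ, (C y : ℂ) *
            (Complex.exp ((h : ℂ) * ((x : ℝ) + y : ℝ) * Complex.I)
              - Complex.exp ((h : ℂ) * (x : ℂ) * Complex.I)))
      = (if h = -k then 1 else 0) * (2 * (π : ℂ)) *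
          (((∫ y in Icc (-δ) δ, C y)
            - ∫ y in Icc (-δ) δ, C y * Real.cos ((h : ℝ) * y) : ℝ) : ℂ)) ∧
    ((∫ x in Icc 0 (2 * π),
        Complex.exp ((h : ℂ) * (x : ℂ) * Complex.I) *
          Complex.exp ((k : ℂ) * (x : ℂ) * Complex.I))
      = (if h = -k then 1 else 0) * (2 * (π : ℂ))) ∧
    (0 ≤ (∫ y in Icc (-δ) δ, C y)
          - ∫ y in Icc (-δ) δ, C y * Real.cos ((h : ℝ) * y)) :=
  fourier_galerkin_entries_general δ C hCnonneg hCeven hCint h k
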